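/- Let n ≥ 1 and let Λ be a discrete sequence in the unit disk 𝔻 for which there exists H ∈ Har₊(𝔻) such that every pseudohyperbolic disk D(λ, e^{−H(λ)}), λ ∈ Λ, contains at most n points of Λ. Then Λ can be written as the union of n weakly separated sequences. -/

import Mathlib

/-!
Join two points of `Λ` when one lies in the disk `D(λ, e^{-H(λ)})` of the other. A neighbour `μ`
of `λ` with `H(μ) ≥ H(λ)` has the smaller disk, hence lies in `D(λ, e^{-H(λ)})`, so every point
has fewer than `n` such neighbours. Colouring greedily in increasing order of `H` shows that every
finite subgraph is `n`-colourable, and by compactness so is the whole graph. Two distinct points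
`λ, μ` of one colour class satisfy `ρ(λ, μ) ≥ max(e^{-H(λ)}, e^{-H(μ)})`, so by the triangle
inequality for `ρ` the disks `D(λ, e^{-H(λ)}/2)` are pairwise disjoint: `H + log 2` witnesses weak
separation. The triangle inequality follows from the invariance of `ρ` under the Blaschke factors
and the bound `ρ(a, b) ≤ |a| + |b|`.
-/

open Complex Set

noncomputable section

/-- The open unit disk `𝔻` in the complex plane. -/
def unitDisk : Set ℂ := {z : ℂ | ‖z‖ < 1}

/-- The Laplacian of `H : ℂ → ℝ`, as the sum of the second directional
derivatives in the directions `1` and `I`. -/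
def laplacian (H : ℂ → ℝ) (z : ℂ) : ℝ :=
  fderiv ℝ (fun w => fderiv ℝ H w 1) z 1 +
    fderiv ℝ (fun w => fderiv ℝ H w Complex.I) z Complex.I

/-- `H` is harmonic on the unit disk: twice continuously differentiable with
vanishing Laplacian. -/
def HarmonicOnDisk (H : ℂ → ℝ) : Prop :=
  ContDiffOn ℝ 2 H unitDisk ∧ ∀ z ∈ unitDisk, laplacian H z = 0

/-- `H ∈ Har₊(𝔻)`: a non-negative harmonic function on the unit disk. -/
def HarPos (H : ℂ → ℝ) : Prop :=
  HarmonicOnDisk H ∧ ∀ z ∈ unitDisk, 0 ≤ H z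

/-- The pseudohyperbolic distance `ρ(z,w) = |z-w| / |1 - conj z * w|`. -/
def pDist (z w : ℂ) : ℝ := ‖(z - w) / (1 - (starRingEnd ℂ) z * w)‖

/-- The pseudohyperbolic disk `D(z,r) = {w ∈ 𝔻 : ρ(z,w) < r}`. -/
def pDisk (z : ℂ) (r : ℝ) : Set ℂ := {w ∈ unitDisk | pDist z w < r}

/-- The Blaschke factor `b_a(z) = (z - a)/(1 - conj a * z)`. -/
def blaschke (a z : ℂ) : ℂ := (z - a) / (1 - (starRingEnd ℂ) a * z)

/-- A discrete sequence in `𝔻`: a set of (pairwise distinct) points of the unit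
disk with no accumulation point inside the disk. -/
def DiscreteSeq (Λ : Set ℂ) : Prop :=
  Λ ⊆ unitDisk ∧ ∀ z ∈ unitDisk, ¬ AccPt z (Filter.principal Λ)

/-- The Nevanlinna class `N`: holomorphic functions on `𝔻` such that
`log⁺ |f|` admits a majorant in `Har₊(𝔻)`. -/
def Nevanlinna (f : ℂ → ℂ) : Prop :=
  DifferentiableOn ℂ f unitDisk ∧
    ∃ H : ℂ → ℝ, HarPos H ∧ ∀ z ∈ unitDisk, Real.log (max (‖f z‖) 1) ≤ H z

/-- `Λ ∈ Int N`: for every bounded family of values on `Λ` there is a function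
in the Nevanlinna class interpolating it. -/
def IntN (Λ : Set ℂ) : Prop :=
  ∀ v : ℂ → ℂ, (∃ C : ℝ, ∀ lam ∈ Λ, ‖v lam‖ ≤ C) →
    ∃ f : ℂ → ℂ, Nevanlinna f ∧ ∀ lam ∈ Λ, f lam = v lam

/-- Pseudohyperbolic divided differences:
`divDiff j ω z = Δʲω(z 0, …, z j)`. -/
def divDiff : (j : ℕ) → (ℂ → ℂ) → (Fin (j + 1) → ℂ) → ℂ
  | 0, ω, z => ω (z 0)
  | j + 1, ω, z =>
      (divDiff j ω (fun i => z i.succ) - divDiff j ω (fun i => z i.castSucc)) /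
        blaschke (z 0) (z (Fin.last (j + 1)))

/-- `ω ∈ X^m(Λ)`: the divided differences of order `m` (on tuples of `m+1`
pairwise distinct points of `Λ`) are uniformly controlled by a positive
harmonic function. -/
def MemX (m : ℕ) (Λ : Set ℂ) (ω : ℂ → ℂ) : Prop :=
  ∃ H : ℂ → ℝ, HarPos H ∧ ∃ C : ℝ,
    ∀ z : Fin (m + 1) → ℂ, (∀ i, z i ∈ Λ) → Function.Injective z →
      ‖divDiff m ω z‖ * Real.exp (-(∑ i, H (z i))) ≤ C

/-- `Λ` is weakly separated: for some `H ∈ Har₊(𝔻)` the pseudohyperbolic disks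
`D(λ, e^{-H(λ)})`, `λ ∈ Λ`, are pairwise disjoint. -/
def WeaklySep (Λ : Set ℂ) : Prop :=
  ∃ H : ℂ → ℝ, HarPos H ∧ ∀ lam ∈ Λ, ∀ mu ∈ Λ, lam ≠ mu →
    Disjoint (pDisk lam (Real.exp (-H lam))) (pDisk mu (Real.exp (-H mu)))

open ComplexConjugate

namespace SimpleGraph

variable {V β : Type*} [LinearOrder β] {G : SimpleGraph V} {n : ℕ}

theorem colorable_of_finite_of_encard_upperNeighbors_lt [Finite V] (f : V → β)
    (h : ∀ v, {w | G.Adj v w ∧ f v ≤ f w}.encard < n) : G.Colorable n := by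
  classical
  cases nonempty_fintype V
  obtain ⟨c, hc⟩ : ∃ c : V → Fin n, ∀ v ∈ Finset.univ, ∀ w ∈ Finset.univ, G.Adj v w → c v ≠ c w
  · refine Finset.induction_on_min_value f Finset.univ ?_ ?_
    · rcases isEmpty_or_nonempty V with hV | ⟨⟨v⟩⟩
      · exact ⟨isEmptyElim, by simp⟩
      · exact ⟨fun _ => ⟨0, by exact_mod_cast pos_of_gt (h v)⟩, by simp⟩
    rintro a s has hmin ⟨c, hc⟩
    set t := s.filter (G.Adj a)
    have ht : t.card < n := by
      have : (t : Set V) ⊆ {w | G.Adj a w ∧ f a ≤ f w} := fun x hx => by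
        rw [Finset.coe_filter] at hx
        exact ⟨hx.2, hmin x hx.1⟩
      exact_mod_cast (Set.encard_coe_eq_coe_finsetCard t ▸ Set.encard_mono this).trans_lt (h a)
    obtain ⟨i, -, hi⟩ := Finset.exists_mem_notMem_of_card_lt_card (s := t.image c)
      (t := Finset.univ) (by simpa using Finset.card_image_le.trans_lt ht)
    have hnew : ∀ x ∈ s, G.Adj a x → c x ≠ i := fun x hx hax hxi =>
      hi (hxi ▸ Finset.mem_image_of_mem c (Finset.mem_filter.2 ⟨hx, hax⟩))
    refine ⟨Function.update c a i, ?_⟩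
    simp only [Finset.mem_insert]
    rintro v (rfl | hv) w (rfl | hw) hvw
    · exact (G.ne_of_adj hvw rfl).elim
    · rw [Function.update_self, Function.update_of_ne (ne_of_mem_of_not_mem hw has)]
      exact (hnew w hw hvw).symm
    · rw [Function.update_self, Function.update_of_ne (ne_of_mem_of_not_mem hv has)]
      exact hnew v hv hvw.symm
    · rw [Function.update_of_ne (ne_of_mem_of_not_mem hv has),
        Function.update_of_ne (ne_of_mem_of_not_mem hw has)]
      exact hc v hv w hw hvw
  exact ⟨Coloring.mk c fun hvw => hc _ (Finset.mem_univ _) _ (Finset.mem_univ _) hvw⟩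

theorem colorable_of_encard_upperNeighbors_lt (f : V → β)
    (h : ∀ v, {w | G.Adj v w ∧ f v ≤ f w}.encard < n) : G.Colorable n :=
  nonempty_hom_of_forall_finite_subgraph_hom fun G' hG' =>
    have := hG'.to_subtype
    (colorable_of_finite_of_encard_upperNeighbors_lt (G := G'.coe) (f ∘ (↑)) fun v =>
      (Set.encard_le_encard_of_injOn (t := {w | G.Adj v w ∧ f v ≤ f w})
        (fun _ hw => ⟨G'.adj_sub hw.1, hw.2⟩) Subtype.val_injective.injOn).trans_lt (h v)).some

end SimpleGraph

theorem one_sub_conj_mul_ne_zero {a b : ℂ} (ha : a ∈ unitDisk) (hb : b ∈ unitDisk) :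
    1 - conj a * b ≠ 0 := by
  have : ‖conj a * b‖ < 1 := by
    rw [norm_mul, Complex.norm_conj]
    exact mul_lt_one_of_nonneg_of_lt_one_left (norm_nonneg a) ha hb.le
  refine sub_ne_zero.2 fun h => ?_
  rw [← h, norm_one] at this
  exact this.false

theorem normSq_one_sub_conj_mul_sub_normSq_sub (a b : ℂ) :
    normSq (1 - conj a * b) - normSq (a - b) = (1 - normSq a) * (1 - normSq b) := by
  simp only [normSq_apply, sub_re, sub_im, mul_re, mul_im, one_re, one_im, conj_re, conj_im]
  ring

theorem pDist_comm (z w : ℂ) : pDist z w = pDist w z := by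
  rw [pDist, pDist, norm_div, norm_div, norm_sub_rev,
    ← Complex.norm_conj (1 - conj w * z)]
  simp only [map_sub, map_one, map_mul, conj_conj, mul_comm]

theorem pDist_self (z : ℂ) : pDist z z = 0 := by
  simp [pDist]

theorem pDist_lt_one {a b : ℂ} (ha : a ∈ unitDisk) (hb : b ∈ unitDisk) : pDist a b < 1 := by
  have hpos : 0 < (1 - normSq a) * (1 - normSq b) := by
    have ha' : normSq a < 1 := by
      rw [← Complex.sq_norm]; exact pow_lt_one₀ (norm_nonneg a) ha two_ne_zero
    have hb' : normSq b < 1 := by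
      rw [← Complex.sq_norm]; exact pow_lt_one₀ (norm_nonneg b) hb two_ne_zero
    exact mul_pos (sub_pos.2 ha') (sub_pos.2 hb')
  rw [pDist, norm_div, div_lt_one (norm_pos_iff.2 (one_sub_conj_mul_ne_zero ha hb)),
    ← pow_lt_pow_iff_left₀ (norm_nonneg _) (norm_nonneg _) two_ne_zero, Complex.sq_norm,
    Complex.sq_norm]
  linarith [normSq_one_sub_conj_mul_sub_normSq_sub a b]

/- `1 - ρ(a, b)² = (1 - |a|²)(1 - |b|²) / |1 - āb|²` and `|1 - āb| ≤ 1 + |a||b|` give even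
`ρ(a, b) ≤ (|a| + |b|) / (1 + |a||b|)`. -/
theorem pDist_le_norm_add_norm {a b : ℂ} (ha : a ∈ unitDisk) (hb : b ∈ unitDisk) :
    pDist a b ≤ ‖a‖ + ‖b‖ := by
  set p := ‖a‖
  set q := ‖b‖
  set D := ‖1 - conj a * b‖
  have hD : D ^ 2 ≤ (1 + p * q) ^ 2 := by
    refine pow_le_pow_left₀ (norm_nonneg _) ?_ 2
    simpa [p, q, D, norm_mul, Complex.norm_conj] using norm_sub_le (1 : ℂ) (conj a * b)
  have hid := normSq_one_sub_conj_mul_sub_normSq_sub a b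
  rw [← Complex.sq_norm, ← Complex.sq_norm, ← Complex.sq_norm, ← Complex.sq_norm] at hid
  rw [pDist, norm_div, div_le_iff₀ (norm_pos_iff.2 (one_sub_conj_mul_ne_zero ha hb)),
    ← pow_le_pow_iff_left₀ (norm_nonneg _) (by positivity) two_ne_zero]
  have hp : p < 1 := ha
  have hq : q < 1 := hb
  have hK : 0 ≤ (1 - p ^ 2) * (1 - q ^ 2) :=
    mul_nonneg (by nlinarith [norm_nonneg a]) (by nlinarith [norm_nonneg b])
  rcases le_total ((p + q) ^ 2) 1 with h | h
  · have hpq : 1 ≤ (1 + p * q) ^ 2 := one_le_pow₀ (le_add_of_nonneg_right (by positivity))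
    nlinarith [mul_le_mul_of_nonneg_right hD (sub_nonneg.2 h),
      mul_le_mul_of_nonneg_left hpq (sq_nonneg (p + q))]
  · nlinarith [mul_nonpos_of_nonneg_of_nonpos (sq_nonneg D) (sub_nonpos.2 h)]

theorem norm_blaschke (u z : ℂ) : ‖blaschke u z‖ = pDist u z := by
  rw [blaschke, pDist, norm_div, norm_div, norm_sub_rev]

theorem blaschke_mem_unitDisk {u z : ℂ} (hu : u ∈ unitDisk) (hz : z ∈ unitDisk) :
    blaschke u z ∈ unitDisk :=
  show ‖blaschke u z‖ < 1 by rw [norm_blaschke]; exact pDist_lt_one hu hz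

theorem pDist_blaschke {u z w : ℂ} (hu : u ∈ unitDisk) (hz : z ∈ unitDisk) (hw : w ∈ unitDisk) :
    pDist (blaschke u z) (blaschke u w) = pDist z w := by
  have hA := one_sub_conj_mul_ne_zero hu hz
  have hB := one_sub_conj_mul_ne_zero hu hw
  have hA' : conj (1 - conj u * z) ≠ 0 := (map_ne_zero _).2 hA
  have hk := one_sub_conj_mul_ne_zero hu hu
  have hzw := one_sub_conj_mul_ne_zero hz hw
  have hnum : blaschke u z - blaschke u w =
      (1 - conj u * u) * (z - w) / ((1 - conj u * z) * (1 - conj u * w)) := by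
    rw [blaschke, blaschke, div_sub_div _ _ hA hB]
    ring
  have hden : 1 - conj (blaschke u z) * blaschke u w =
      (1 - conj u * u) * (1 - conj z * w) / (conj (1 - conj u * z) * (1 - conj u * w)) := by
    rw [blaschke, blaschke, map_div₀, div_mul_div_comm, one_sub_div (mul_ne_zero hA' hB)]
    simp only [map_sub, map_one, map_mul, conj_conj]
    ring
  have hquot : (blaschke u z - blaschke u w) / (1 - conj (blaschke u z) * blaschke u w) =
      (z - w) / (1 - conj z * w) * (conj (1 - conj u * z) / (1 - conj u * z)) := by
    rw [hnum, hden]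
    field_simp
  rw [pDist, hquot, norm_mul, norm_div (conj _), Complex.norm_conj,
    div_self (norm_ne_zero_iff.2 hA), mul_one, pDist]

theorem pDist_triangle {z u w : ℂ} (hz : z ∈ unitDisk) (hu : u ∈ unitDisk) (hw : w ∈ unitDisk) :
    pDist z w ≤ pDist z u + pDist u w :=
  calc pDist z w = pDist (blaschke u z) (blaschke u w) := (pDist_blaschke hu hz hw).symm
    _ ≤ ‖blaschke u z‖ + ‖blaschke u w‖ :=
      pDist_le_norm_add_norm (blaschke_mem_unitDisk hu hz) (blaschke_mem_unitDisk hu hw)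
    _ = pDist z u + pDist u w := by rw [norm_blaschke, norm_blaschke, pDist_comm u z]

theorem HarPos.add_const {H : ℂ → ℝ} (hH : HarPos H) {c : ℝ} (hc : 0 ≤ c) :
    HarPos (fun z => H z + c) :=
  ⟨⟨hH.1.1.add contDiffOn_const, fun z hz => by
      simpa only [laplacian, fderiv_add_const] using hH.1.2 z hz⟩,
    fun z hz => add_nonneg (hH.2 z hz) hc⟩

theorem weaklySep_of_exp_neg_le_pDist {H : ℂ → ℝ} (hH : HarPos H) {S : Set ℂ}
    (hS : S ⊆ unitDisk) (hsep : ∀ a ∈ S, ∀ b ∈ S, a ≠ b → Real.exp (-H a) ≤ pDist a b) :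
    WeaklySep S := by
  refine ⟨fun z => H z + Real.log 2, hH.add_const (Real.log_nonneg one_le_two), ?_⟩
  have half (z : ℂ) : Real.exp (-(H z + Real.log 2)) = Real.exp (-H z) / 2 := by
    rw [neg_add, Real.exp_add, Real.exp_neg (Real.log 2), Real.exp_log two_pos]
    ring
  rintro a ha b hb hab
  refine Set.disjoint_left.2 fun w ⟨hw, haw⟩ ⟨_, hbw⟩ => ?_
  rw [half] at haw hbw
  have htri := pDist_triangle (hS ha) hw (hS hb)
  rw [pDist_comm w b] at htri
  linarith [hsep a ha b hb hab, hsep b hb a ha hab.symm, pDist_comm a b]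

def overlapGraph (Λ : Set ℂ) (H : ℂ → ℝ) : SimpleGraph ℂ :=
  SimpleGraph.fromRel fun a b => a ∈ Λ ∧ b ∈ Λ ∧ pDist a b < Real.exp (-H a)

section OverlapGraph

variable {Λ : Set ℂ} {H : ℂ → ℝ}

theorem encard_upperNeighbors_overlapGraph_lt {n : ℕ} (hn : 0 < n) (hΛ : Λ ⊆ unitDisk)
    (hcount : ∀ a ∈ Λ, (Λ ∩ pDisk a (Real.exp (-H a))).encard ≤ n) (a : ℂ) :
    {b | (overlapGraph Λ H).Adj a b ∧ H a ≤ H b}.encard < n := by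
  by_cases ha : a ∈ Λ
  · set s := Λ ∩ pDisk a (Real.exp (-H a))
    have hsub : {b | (overlapGraph Λ H).Adj a b ∧ H a ≤ H b} ⊆ s \ {a} := by
      rintro b ⟨⟨hne, ⟨-, hb, hab⟩ | ⟨hb, -, hba⟩⟩, hle⟩
      · exact ⟨⟨hb, hΛ hb, hab⟩, hne.symm⟩
      · refine ⟨⟨hb, hΛ hb, ?_⟩, hne.symm⟩
        rw [pDist_comm]
        exact hba.trans_le (Real.exp_le_exp.2 (neg_le_neg hle))
    have has : a ∈ s := ⟨ha, hΛ ha, by rw [pDist_self]; exact Real.exp_pos _⟩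
    calc _ ≤ (s \ {a}).encard := Set.encard_mono hsub
      _ < s.encard := ((Set.finite_of_encard_le_coe (hcount a ha)).sdiff).encard_lt_encard
          (Set.sdiff_singleton_ssubset.2 has)
      _ ≤ n := hcount a ha
  · have hempty : {b | (overlapGraph Λ H).Adj a b ∧ H a ≤ H b} = ∅ :=
      Set.eq_empty_of_forall_notMem fun b ⟨⟨_, hab⟩, _⟩ =>
        ha (hab.elim (fun h => h.1) fun h => h.2.1)
    simpa [hempty] using hn

theorem exp_neg_le_pDist_of_not_overlapGraph_adj {a b : ℂ} (ha : a ∈ Λ) (hb : b ∈ Λ)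
    (hab : a ≠ b) (h : ¬ (overlapGraph Λ H).Adj a b) : Real.exp (-H a) ≤ pDist a b :=
  not_lt.1 fun hlt => h ⟨hab, Or.inl ⟨ha, hb, hlt⟩⟩

end OverlapGraph

/-- If for some `H ∈ Har₊(𝔻)` every disk `D(λ, e^{-H(λ)})`, `λ ∈ Λ`, contains
at most `n` points of `Λ`, then `Λ` is the union of `n` weakly separated
sequences. -/
theorem union_of_weaklySep_of_count_bound
    (n : ℕ) (hn : 1 ≤ n) (Λ : Set ℂ) (hΛ : DiscreteSeq Λ)
    (h : ∃ H : ℂ → ℝ, HarPos H ∧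
      ∀ lam ∈ Λ, (Λ ∩ pDisk lam (Real.exp (-H lam))).encard ≤ (n : ℕ∞)) :
    ∃ Λs : Fin n → Set ℂ, Λ = ⋃ i, Λs i ∧ ∀ i, WeaklySep (Λs i) := by
  obtain ⟨H, hH, hcount⟩ := h
  obtain ⟨C⟩ := SimpleGraph.colorable_of_encard_upperNeighbors_lt H
    (encard_upperNeighbors_overlapGraph_lt hn hΛ.1 hcount)
  refine ⟨fun i => Λ ∩ C.colorClass i, ?_, fun i =>
    weaklySep_of_exp_neg_le_pDist hH (Set.inter_subset_left.trans hΛ.1) ?_⟩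
  · ext z
    simp [SimpleGraph.Coloring.colorClass]
  · rintro a ⟨ha, hai⟩ b ⟨hb, hbi⟩ hab
    exact exp_neg_le_pDist_of_not_overlapGraph_adj ha hb hab (C.not_adj_of_mem_colorClass hai hbi)
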